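/- Let n ≥ 2, λ > 0, and 1 ≤ p ≤ ∞. Then the Lipschitz constant of the softmax σ_λ with respect to the ℓ_p norm is exactly λ/2: that is, sup over pairs x ≠ y in ℝⁿ of ‖σ_λ(x) − σ_λ(y)‖_p / ‖x − y‖_p equals λ/2. -/

import Mathlib

open scoped ENNReal BigOperators

/-- The softmax function with inverse temperature `lam`. -/
noncomputable def softmax {n : ℕ} (lam : ℝ) (x : Fin n → ℝ) : Fin n → ℝ :=
  fun i => Real.exp (lam * x i) / ∑ j, Real.exp (lam * x j)

/-- The ℓ_p norm on `Fin n → ℝ`, for `p ∈ [1, ∞]`. -/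
noncomputable def lpNorm {n : ℕ} (p : ℝ≥0∞) (x : Fin n → ℝ) : ℝ :=
  if p = ⊤ then ⨆ i, |x i| else (∑ i, |x i| ^ p.toReal) ^ (1 / p.toReal)

/-- The ℓ_p-induced operator norm of a matrix. -/
noncomputable def opNorm {n m : ℕ} (p : ℝ≥0∞) (A : Matrix (Fin n) (Fin m) ℝ) : ℝ :=
  ⨆ v : {v : Fin m → ℝ // v ≠ 0}, lpNorm p (A.mulVec v.val) / lpNorm p v.val

/-- The matrix `Diag(s) - s sᵀ` (Jacobian of softmax with `lam = 1` at a point with value `s`). -/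
noncomputable def softmaxJac {n : ℕ} (s : Fin n → ℝ) : Matrix (Fin n) (Fin n) ℝ :=
  Matrix.diagonal s - Matrix.vecMulVec s s

/-- The open (interior of the) probability simplex. -/
def openSimplex (n : ℕ) : Set (Fin n → ℝ) :=
  {u | (∀ i, 0 < u i) ∧ ∑ i, u i = 1}

/-- The (closed) probability simplex. -/
def probSimplex (n : ℕ) : Set (Fin n → ℝ) :=
  {u | (∀ i, 0 ≤ u i) ∧ ∑ i, u i = 1}

/-!
The Jacobian of `softmax lam` at `x` is `lam • softmaxJac s` with `s = softmax lam x` a probability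
vector. The absolute values of its entries sum to `2 sᵢ (1 - sᵢ) ≤ 1/2` along every row and, the
matrix being symmetric, along every column; by the Schur test (Hölder's inequality on each row) its
`ℓ_p` operator norm is at most `1/2` for every `p`, and the mean value theorem gives the Lipschitz
bound `lam / 2`.

For the lower bound let `x` have `xᵢ = ε`, `xⱼ = -ε` and all other coordinates `-1/ε`, and let `y`
be `x` with `xᵢ, xⱼ` exchanged. Both `x - y` and `σ(x) - σ(y)` are multiples of `eᵢ - eⱼ`, so the
ratio of their norms is `(σᵢ - σⱼ)/(2ε) = sinh (lam ε) / (ε Z_ε)`, where the partition function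
`Z_ε` tends to `2`; the ratio tends to `lam / 2` as `ε → 0⁺`.
-/

open Finset Matrix Filter Topology

section LpNorm

variable {n : ℕ}

lemma lpNorm_nonneg (p : ℝ≥0∞) (x : Fin n → ℝ) : 0 ≤ lpNorm p x := by
  unfold lpNorm
  split_ifs
  · exact Real.iSup_nonneg fun _ => abs_nonneg _
  · positivity

lemma lpNorm_top (x : Fin n → ℝ) : lpNorm ⊤ x = ⨆ i, |x i| := if_pos rfl

lemma lpNorm_rpow_toReal {p : ℝ≥0∞} (hp0 : p ≠ 0) (hp : p ≠ ⊤) (x : Fin n → ℝ) :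
    lpNorm p x ^ p.toReal = ∑ i, |x i| ^ p.toReal := by
  rw [lpNorm, if_neg hp, one_div,
    Real.rpow_inv_rpow (by positivity) (ENNReal.toReal_ne_zero.2 ⟨hp0, hp⟩)]

lemma lpNorm_eq_norm_toLp (p : ℝ≥0∞) [Fact (1 ≤ p)] (x : Fin n → ℝ) :
    lpNorm p x = ‖WithLp.toLp p x‖ := by
  rcases eq_or_ne p ⊤ with rfl | hp
  · exact if_pos rfl
  · rw [lpNorm, if_neg hp,
      PiLp.norm_eq_sum (ENNReal.toReal_pos (zero_lt_one.trans_le Fact.out).ne' hp)]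
    rfl

lemma lpNorm_smul (p : ℝ≥0∞) [Fact (1 ≤ p)] (c : ℝ) (x : Fin n → ℝ) :
    lpNorm p (c • x) = |c| * lpNorm p x := by
  rw [lpNorm_eq_norm_toLp, lpNorm_eq_norm_toLp, WithLp.toLp_smul, norm_smul, Real.norm_eq_abs]

lemma lpNorm_pos (p : ℝ≥0∞) [Fact (1 ≤ p)] {x : Fin n → ℝ} (hx : x ≠ 0) : 0 < lpNorm p x := by
  rwa [lpNorm_eq_norm_toLp, norm_pos_iff, Ne, WithLp.toLp_eq_zero]

lemma lpNorm_sub_le_of_hasFDerivAt {p : ℝ≥0∞} (hp : 1 ≤ p) {g : (Fin n → ℝ) → Fin n → ℝ}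
    {g' : (Fin n → ℝ) → (Fin n → ℝ) →L[ℝ] (Fin n → ℝ)} {C : ℝ} (hC : 0 ≤ C)
    (hg : ∀ x, HasFDerivAt g (g' x) x) (hg' : ∀ x v, lpNorm p (g' x v) ≤ C * lpNorm p v)
    (x y : Fin n → ℝ) : lpNorm p (g x - g y) ≤ C * lpNorm p (x - y) := by
  have : Fact (1 ≤ p) := ⟨hp⟩
  let E := PiLp p (fun _ : Fin n => ℝ)
  let e := PiLp.continuousLinearEquiv p ℝ (fun _ : Fin n => ℝ)
  let f' : E → E →L[ℝ] E := fun u =>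
    (e.symm : (Fin n → ℝ) →L[ℝ] E).comp ((g' u.ofLp).comp (e : E →L[ℝ] (Fin n → ℝ)))
  have hf : ∀ u, HasFDerivAt (e.symm ∘ g ∘ e) (f' u) u := fun u =>
    e.symm.hasFDerivAt.comp u ((hg u.ofLp).comp u e.hasFDerivAt)
  have hf' : ∀ u, ‖f' u‖ ≤ C := fun u =>
    ContinuousLinearMap.opNorm_le_bound _ hC fun v => by
      have h := hg' u.ofLp v.ofLp
      rwa [lpNorm_eq_norm_toLp, lpNorm_eq_norm_toLp] at h
  have h := Convex.norm_image_sub_le_of_norm_hasFDerivWithin_le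
    (fun u _ => (hf u).hasFDerivWithinAt) (fun u _ => hf' u) convex_univ
    (Set.mem_univ (WithLp.toLp p y)) (Set.mem_univ (WithLp.toLp p x))
  rwa [lpNorm_eq_norm_toLp, lpNorm_eq_norm_toLp]

end LpNorm

section SchurTest

variable {m n : ℕ}

lemma abs_mulVec_le (A : Matrix (Fin m) (Fin n) ℝ) (v : Fin n → ℝ) (i : Fin m) :
    |(A *ᵥ v) i| ≤ ∑ j, |A i j| * |v j| :=
  (abs_sum_le_sum_abs (fun j => A i j * v j) univ).trans_eq (by simp_rw [abs_mul])

lemma abs_mulVec_rpow_le (A : Matrix (Fin m) (Fin n) ℝ) {K r : ℝ} (hr : 1 ≤ r) {i : Fin m}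
    (hrow : ∑ j, |A i j| ≤ K) (v : Fin n → ℝ) :
    |(A *ᵥ v) i| ^ r ≤ K ^ (r - 1) * ∑ j, |A i j| * |v j| ^ r := by
  have hW : 0 ≤ ∑ j, |A i j| := by positivity
  have hT : 0 ≤ ∑ j, |A i j| * |v j| ^ r := by positivity
  have holder := Real.inner_le_weight_mul_Lp_of_nonneg univ hr (fun j => |A i j|)
    (fun j => |v j|) (fun _ => abs_nonneg _) (fun _ => abs_nonneg _)
  calc |(A *ᵥ v) i| ^ r
      ≤ ((∑ j, |A i j|) ^ (1 - r⁻¹) * (∑ j, |A i j| * |v j| ^ r) ^ r⁻¹) ^ r :=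
        Real.rpow_le_rpow (abs_nonneg _) ((abs_mulVec_le A v i).trans holder) (by linarith)
    _ = (∑ j, |A i j|) ^ (r - 1) * ∑ j, |A i j| * |v j| ^ r := by
        rw [Real.mul_rpow (by positivity) (by positivity), ← Real.rpow_mul hW,
          Real.rpow_inv_rpow hT (by positivity), sub_mul, inv_mul_cancel₀ (by positivity), one_mul]
    _ ≤ K ^ (r - 1) * ∑ j, |A i j| * |v j| ^ r := by gcongr

theorem lpNorm_mulVec_le_of_sum_abs_le {p : ℝ≥0∞} (hp : 1 ≤ p) (A : Matrix (Fin m) (Fin n) ℝ)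
    {K : ℝ} (hK : 0 ≤ K) (hrow : ∀ i, ∑ j, |A i j| ≤ K) (hcol : ∀ j, ∑ i, |A i j| ≤ K)
    (v : Fin n → ℝ) : lpNorm p (A *ᵥ v) ≤ K * lpNorm p v := by
  by_cases htop : p = ⊤
  · subst htop
    simp only [lpNorm_top]
    have hM : 0 ≤ ⨆ k, |v k| := Real.iSup_nonneg fun _ => abs_nonneg _
    refine Real.iSup_le (fun i => ?_) (mul_nonneg hK hM)
    have hv : ∀ j, |v j| ≤ ⨆ k, |v k| := le_ciSup (Finite.bddAbove_range _)
    calc |(A *ᵥ v) i| ≤ ∑ j, |A i j| * |v j| := abs_mulVec_le A v i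
      _ ≤ ∑ j, |A i j| * ⨆ k, |v k| := by gcongr with j; exact hv j
      _ ≤ K * ⨆ k, |v k| := by
        rw [← sum_mul]
        exact mul_le_mul_of_nonneg_right (hrow i) hM
  · have hp0 : p ≠ 0 := by rintro rfl; simp at hp
    set r := p.toReal
    have hr : 1 ≤ r := by simpa using ENNReal.toReal_mono htop hp
    rw [← Real.rpow_le_rpow_iff (lpNorm_nonneg p _) (mul_nonneg hK (lpNorm_nonneg p v))
      (by linarith : 0 < r), Real.mul_rpow hK (lpNorm_nonneg p v), lpNorm_rpow_toReal hp0 htop,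
      lpNorm_rpow_toReal hp0 htop]
    calc ∑ i, |(A *ᵥ v) i| ^ r ≤ ∑ i, K ^ (r - 1) * ∑ j, |A i j| * |v j| ^ r :=
          sum_le_sum fun i _ => abs_mulVec_rpow_le A hr (hrow i) v
      _ = K ^ (r - 1) * ∑ j, (∑ i, |A i j|) * |v j| ^ r := by
          rw [← mul_sum, sum_comm]; simp_rw [sum_mul]
      _ ≤ K ^ (r - 1) * ∑ j, K * |v j| ^ r := by gcongr with j; exact hcol j
      _ = K ^ r * ∑ j, |v j| ^ r := by
          rw [← mul_sum, ← mul_assoc, ← Real.rpow_add_one' hK (by linarith), sub_add_cancel]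

end SchurTest

section UpperBound

variable {n : ℕ}

lemma sum_exp_mul_pos [NeZero n] (lam : ℝ) (x : Fin n → ℝ) : 0 < ∑ j, Real.exp (lam * x j) :=
  sum_pos (fun _ _ => Real.exp_pos _) univ_nonempty

lemma softmax_mem_probSimplex [NeZero n] (lam : ℝ) (x : Fin n → ℝ) :
    softmax lam x ∈ probSimplex n :=
  ⟨fun _ => (div_pos (Real.exp_pos _) (sum_exp_mul_pos lam x)).le, by
    simp only [softmax]
    rw [← sum_div, div_self (sum_exp_mul_pos lam x).ne']⟩

lemma le_one_of_mem_probSimplex {s : Fin n → ℝ} (hs : s ∈ probSimplex n) (i : Fin n) : s i ≤ 1 :=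
  hs.2 ▸ single_le_sum (fun j _ => hs.1 j) (mem_univ i)

lemma softmaxJac_mulVec_apply (s v : Fin n → ℝ) (i : Fin n) :
    (softmaxJac s *ᵥ v) i = s i * (v i - ∑ j, s j * v j) := by
  simp [softmaxJac, mulVec, dotProduct, vecMulVec_apply, sub_mul, diagonal_apply, mul_sub,
    mul_sum, mul_assoc]

lemma isSymm_softmaxJac (s : Fin n → ℝ) : (softmaxJac s).IsSymm :=
  (isSymm_diagonal s).sub (transpose_vecMulVec s s)

lemma sum_abs_softmaxJac {s : Fin n → ℝ} (hs : s ∈ probSimplex n) (i : Fin n) :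
    ∑ j, |softmaxJac s i j| = 2 * s i * (1 - s i) := by
  have hterm : ∀ j, |softmaxJac s i j| = s i * s j + if i = j then s i * (1 - 2 * s i) else 0 := by
    intro j
    rcases eq_or_ne i j with rfl | hij
    · simp only [softmaxJac, Matrix.sub_apply, diagonal_apply_eq, vecMulVec_apply, if_true]
      rw [abs_of_nonneg (by nlinarith [hs.1 i, le_one_of_mem_probSimplex hs i])]
      ring
    · simp [softmaxJac, vecMulVec_apply, hij, abs_of_nonneg (hs.1 i), abs_of_nonneg (hs.1 j)]
  simp_rw [hterm, sum_add_distrib, ← mul_sum, hs.2, sum_ite_eq, mem_univ, if_true]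
  ring

lemma lpNorm_softmaxJac_mulVec_le {p : ℝ≥0∞} (hp : 1 ≤ p) {s : Fin n → ℝ}
    (hs : s ∈ probSimplex n) (v : Fin n → ℝ) :
    lpNorm p (softmaxJac s *ᵥ v) ≤ 1 / 2 * lpNorm p v := by
  have hrow : ∀ i, ∑ j, |softmaxJac s i j| ≤ 1 / 2 := fun i => by
    rw [sum_abs_softmaxJac hs]
    nlinarith [sq_nonneg (2 * s i - 1)]
  refine lpNorm_mulVec_le_of_sum_abs_le hp _ (by norm_num) hrow (fun j => ?_) v
  simpa only [(isSymm_softmaxJac s).apply] using hrow j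

lemma hasFDerivAt_softmax [NeZero n] (lam : ℝ) (x : Fin n → ℝ) :
    HasFDerivAt (softmax lam)
      (LinearMap.toContinuousLinearMap (lam • softmaxJac (softmax lam x)).mulVecLin) x := by
  have hexp : ∀ i : Fin n, HasFDerivAt (fun x : Fin n → ℝ => Real.exp (lam * x i))
      (Real.exp (lam * x i) • lam • ContinuousLinearMap.proj i) x := fun i =>
    ((hasFDerivAt_apply i x).const_mul lam).exp
  have hZ := HasFDerivAt.fun_sum (u := univ) fun j _ => hexp j
  have hZ0 := sum_exp_mul_pos lam x
  have hZinv := (hasDerivAt_inv hZ0.ne').comp_hasFDerivAt x hZ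
  refine hasFDerivAt_pi'.2 fun i => ((hexp i).mul hZinv).congr_fderiv ?_
  ext v
  simp only [neg_smul, smul_neg, Function.comp_apply, _root_.add_apply, _root_.neg_apply,
    _root_.smul_apply, _root_.sum_apply, ContinuousLinearMap.proj_apply, smul_eq_mul, map_smul,
    ContinuousLinearMap.comp_smulₛₗ, Real.ringHom_apply, ContinuousLinearMap.comp_apply,
    LinearMap.coe_toContinuousLinearMap', mulVecBilin_apply, softmaxJac_mulVec_apply, softmax]
  set Z := ∑ j, Real.exp (lam * x j)
  have h1 : ∑ j, Real.exp (lam * x j) / Z * v j = (∑ j, Real.exp (lam * x j) * v j) / Z := by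
    simp_rw [sum_div, div_mul_eq_mul_div]
  have h2 : ∑ j, Real.exp (lam * x j) * (lam * v j) = lam * ∑ j, Real.exp (lam * x j) * v j := by
    simp_rw [mul_sum, mul_left_comm]
  rw [h1, h2]
  field_simp
  ring

theorem lpNorm_softmax_sub_le [NeZero n] {p : ℝ≥0∞} (hp : 1 ≤ p) (lam : ℝ) (x y : Fin n → ℝ) :
    lpNorm p (softmax lam x - softmax lam y) ≤ |lam| / 2 * lpNorm p (x - y) := by
  have : Fact (1 ≤ p) := ⟨hp⟩
  refine lpNorm_sub_le_of_hasFDerivAt hp (by positivity) (hasFDerivAt_softmax lam)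
    (fun x v => ?_) x y
  simp only [LinearMap.coe_toContinuousLinearMap', mulVecLin_apply, smul_mulVec, lpNorm_smul]
  calc |lam| * lpNorm p (softmaxJac (softmax lam x) *ᵥ v)
      ≤ |lam| * (1 / 2 * lpNorm p v) := by
        gcongr
        exact lpNorm_softmaxJac_mulVec_le hp (softmax_mem_probSimplex lam x) v
    _ = |lam| / 2 * lpNorm p v := by ring

end UpperBound

section LowerBound

variable {n : ℕ}

lemma sub_comp_swap {ι : Type*} [DecidableEq ι] (f : ι → ℝ) (i j : ι) :
    f - f ∘ Equiv.swap i j = (f i - f j) • (Pi.single i 1 - Pi.single j 1) := by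
  ext k
  rcases eq_or_ne k i with rfl | hki
  · rcases eq_or_ne k j with rfl | hkj <;> simp [*]
  · rcases eq_or_ne k j with rfl | hkj
    · simp [hki]
    · simp [Equiv.swap_apply_of_ne_of_ne, hki, hkj]

lemma softmax_comp_perm (lam : ℝ) (x : Fin n → ℝ) (σ : Equiv.Perm (Fin n)) :
    softmax lam (x ∘ σ) = softmax lam x ∘ σ := by
  ext i
  simp only [softmax, Function.comp_apply, Equiv.sum_comp σ (fun j => Real.exp (lam * x j))]

lemma lpNorm_softmax_sub_comp_swap_div {p : ℝ≥0∞} (hp : 1 ≤ p) (lam : ℝ) {i j : Fin n}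
    (hij : i ≠ j) (x : Fin n → ℝ) :
    lpNorm p (softmax lam x - softmax lam (x ∘ Equiv.swap i j)) / lpNorm p (x - x ∘ Equiv.swap i j)
      = |(softmax lam x i - softmax lam x j) / (x i - x j)| := by
  have : Fact (1 ≤ p) := ⟨hp⟩
  have hd : (Pi.single i 1 - Pi.single j 1 : Fin n → ℝ) ≠ 0 := fun h => by
    simpa [hij] using congrFun h i
  rw [softmax_comp_perm, sub_comp_swap, sub_comp_swap, lpNorm_smul, lpNorm_smul,
    mul_div_mul_right _ _ (lpNorm_pos p hd).ne', abs_div]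

noncomputable def nearExtremalPoint (i j : Fin n) (ε : ℝ) : Fin n → ℝ :=
  fun k => if k = i then ε else if k = j then -ε else -ε⁻¹

lemma nearExtremalPoint_ne_comp_swap {i j : Fin n} (hij : i ≠ j) {ε : ℝ} (hε : 0 < ε) :
    nearExtremalPoint i j ε ≠ nearExtremalPoint i j ε ∘ Equiv.swap i j := fun h => by
  have := congrFun h i
  simp only [nearExtremalPoint, Function.comp_apply, Equiv.swap_apply_left, if_pos, hij.symm,
    if_false] at this
  linarith

lemma tendsto_sum_exp_nearExtremalPoint {lam : ℝ} (hlam : 0 < lam) {i j : Fin n} (hij : i ≠ j) :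
    Tendsto (fun ε => ∑ k, Real.exp (lam * nearExtremalPoint i j ε k)) (𝓝[>] 0) (𝓝 2) := by
  have hexp : ∀ c : ℝ, Tendsto (fun ε : ℝ => Real.exp (lam * (c * ε))) (𝓝[>] 0) (𝓝 1) := fun c => by
    have : Continuous fun ε : ℝ => Real.exp (lam * (c * ε)) := by fun_prop
    simpa using (this.tendsto 0).mono_left nhdsWithin_le_nhds
  have hinv : Tendsto (fun ε : ℝ => Real.exp (-(lam * ε⁻¹))) (𝓝[>] 0) (𝓝 0) :=
    Real.tendsto_exp_atBot.comp <|
      tendsto_neg_atTop_atBot.comp (tendsto_inv_nhdsGT_zero.const_mul_atTop hlam)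
  have hk : ∀ k, Tendsto (fun ε => Real.exp (lam * nearExtremalPoint i j ε k)) (𝓝[>] 0)
      (𝓝 ((Pi.single i 1 + Pi.single j 1 : Fin n → ℝ) k)) := fun k => by
    rcases eq_or_ne k i with rfl | hki
    · simpa [nearExtremalPoint, hij] using hexp 1
    · rcases eq_or_ne k j with rfl | hkj
      · simpa [nearExtremalPoint, hki] using hexp (-1)
      · simpa [nearExtremalPoint, hki, hkj] using hinv
  simpa [sum_add_distrib, one_add_one_eq_two] using tendsto_finsetSum univ fun k _ => hk k

lemma tendsto_softmax_sub_div_nearExtremalPoint {lam : ℝ} (hlam : 0 < lam) {i j : Fin n}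
    (hij : i ≠ j) :
    Tendsto (fun ε => (softmax lam (nearExtremalPoint i j ε) i
        - softmax lam (nearExtremalPoint i j ε) j)
        / (nearExtremalPoint i j ε i - nearExtremalPoint i j ε j)) (𝓝[>] 0) (𝓝 (lam / 2)) := by
  have hsinh : Tendsto (fun ε => Real.sinh (lam * ε) / ε) (𝓝[>] 0) (𝓝 lam) := by
    have h := ((Real.hasDerivAt_sinh _).comp (0 : ℝ)
      ((hasDerivAt_id 0).const_mul lam)).tendsto_slope
    simpa [slope_fun_def_field, Function.comp_def] using h.mono_left (nhdsGT_le_nhdsNE 0)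
  refine (hsinh.div (tendsto_sum_exp_nearExtremalPoint hlam hij) two_ne_zero).congr' ?_
  filter_upwards [self_mem_nhdsWithin] with ε (hε : 0 < ε)
  simp only [Real.sinh_eq, nearExtremalPoint, mul_ite, mul_neg, Pi.div_apply, softmax, ↓reduceIte,
    hij.symm, sub_neg_eq_add]
  field_simp
  ring

end LowerBound

/-- the ℓ_p Lipschitz constant of softmax with inverse temperature lam is
exactly lam/2, for all n ≥ 2 and 1 ≤ p ≤ ∞. -/
theorem softmax_lipschitz_constant_eq {n : ℕ} (hn : 2 ≤ n) (lam : ℝ) (hlam : 0 < lam)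
    (p : ℝ≥0∞) (hp : 1 ≤ p) :
    (⨆ xy : {xy : (Fin n → ℝ) × (Fin n → ℝ) // xy.1 ≠ xy.2},
        lpNorm p (softmax lam xy.val.1 - softmax lam xy.val.2) /
          lpNorm p (xy.val.1 - xy.val.2)) = lam / 2 := by
  have : NeZero n := ⟨by omega⟩
  let i : Fin n := ⟨0, by omega⟩
  let j : Fin n := ⟨1, by omega⟩
  have hij : i ≠ j := by simp [i, j, Fin.ext_iff]
  let witness (ε : ℝ) (hε : 0 < ε) : {xy : (Fin n → ℝ) × (Fin n → ℝ) // xy.1 ≠ xy.2} :=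
    ⟨(nearExtremalPoint i j ε, nearExtremalPoint i j ε ∘ Equiv.swap i j),
      nearExtremalPoint_ne_comp_swap hij hε⟩
  have : Nonempty {xy : (Fin n → ℝ) × (Fin n → ℝ) // xy.1 ≠ xy.2} := ⟨witness 1 one_pos⟩
  have hle : ∀ xy : {xy : (Fin n → ℝ) × (Fin n → ℝ) // xy.1 ≠ xy.2},
      lpNorm p (softmax lam xy.val.1 - softmax lam xy.val.2) / lpNorm p (xy.val.1 - xy.val.2)
        ≤ lam / 2 := fun xy =>
    div_le_of_le_mul₀ (lpNorm_nonneg p _) (half_pos hlam).le <| by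
      simpa only [abs_of_pos hlam] using lpNorm_softmax_sub_le hp lam xy.val.1 xy.val.2
  have hlim := (tendsto_softmax_sub_div_nearExtremalPoint hlam hij).abs
  rw [abs_of_pos (half_pos hlam)] at hlim
  refine le_antisymm (ciSup_le hle) (le_of_tendsto hlim ?_)
  filter_upwards [self_mem_nhdsWithin] with ε (hε : 0 < ε)
  rw [← lpNorm_softmax_sub_comp_swap_div hp lam hij]
  exact le_ciSup ⟨lam / 2, Set.forall_mem_range.2 hle⟩ (witness ε hε)
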